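/- Define F : (0,1) → ℝ by F(t) := ∫_0^{√(−ln t)} √(e^{−2x²} − t²) dx. Then F is differentiable on (0,1) and for every t ∈ (0,1), F′(t) = −t · ∫_0^{√(−ln t)} (e^{−2x²} − t²)^{−1/2} dx, where the latter (improper) integral converges. -/

import Mathlib

/-!
Since `√` vanishes on negative arguments, for `t ≤ t₂` both `F t` and `F t₂` are integrals over
`[0, √(−ln t)]`, and `∂ₛ √(e^{−2x²} − s²) = −s (e^{−2x²} − s²)^{−1/2}` is integrable in `s` up to
the turning point. Fubini therefore gives `F t − F t₂ = ∫_t^{t₂} s G(s) ds` with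
`G(s) = ∫_0^{√(−ln s)} (e^{−2x²} − s²)^{−1/2} dx`. The substitution `x = √(−ln s) u` turns `G(s)`
into `√(−ln s)` times an integral over `[0, 1]` whose integrand is dominated by `C (1 − u)^{−1/2}`
uniformly for `s` near `t`, because `e^{−2x²} − s² ≥ 2 s² (−ln s − x²)` by convexity of `exp`.
Hence `G` is continuous and the fundamental theorem of calculus gives `F′(t) = −t G(t)`.
-/

open MeasureTheory intervalIntegral

/-- The WKB quantization integral for the Gaussian potential `A₀(x) = e^{−x²}`. -/
noncomputable def F (t : ℝ) : ℝ :=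
  ∫ x in (0 : ℝ)..(Real.sqrt (-Real.log t)), Real.sqrt (Real.exp (-2 * x ^ 2) - t ^ 2)

open Set Filter Topology
open scoped Interval

lemma rpow_neg_half_eq_zero_of_nonpos {v : ℝ} (hv : v ≤ 0) : v ^ (-(1:ℝ)/2) = 0 := by
  rcases hv.lt_or_eq with hv | rfl
  · rw [Real.rpow_def_of_neg hv, show -(1:ℝ)/2 * Real.pi = -(Real.pi / 2) by ring,
      Real.cos_neg, Real.cos_pi_div_two, mul_zero]
  · exact Real.zero_rpow (by norm_num)

lemma rpow_neg_half_nonneg (v : ℝ) : 0 ≤ v ^ (-(1:ℝ)/2) := by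
  rcases le_total v 0 with hv | hv
  · rw [rpow_neg_half_eq_zero_of_nonpos hv]
  · exact Real.rpow_nonneg hv _

lemma intervalIntegrable_const_mul_rpow_sub {a b e K r : ℝ} (hr : -1 < r) :
    IntervalIntegrable (fun y => K * (e - y) ^ r) volume a b := by
  simpa using (((intervalIntegrable_rpow' hr (a := e - b) (b := e - a)).comp_sub_left e).const_mul
    K).symm

lemma intervalIntegrable_of_norm_le_const_mul_rpow_sub {E : Type*} [NormedAddCommGroup E]
    {f : ℝ → E} {a b e K r : ℝ} (hr : -1 < r)
    (hf : AEStronglyMeasurable f (volume.restrict (Ι a b)))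
    (hbound : ∀ y ∈ Ι a b, ‖f y‖ ≤ K * (e - y) ^ r) :
    IntervalIntegrable f volume a b :=
  (intervalIntegrable_const_mul_rpow_sub hr).mono_fun' hf
    ((ae_restrict_iff' measurableSet_uIoc).mpr (.of_forall hbound))

lemma hasDerivAt_neg_sqrt_sq_sub_sq {a s : ℝ} (hs : s ^ 2 < a ^ 2) :
    HasDerivAt (fun s => -√(a ^ 2 - s ^ 2)) (s * (a ^ 2 - s ^ 2) ^ (-(1:ℝ)/2)) s := by
  have hpos : 0 < a ^ 2 - s ^ 2 := by linarith
  refine (((hasDerivAt_pow 2 s).const_sub (a ^ 2)).sqrt hpos.ne').neg.congr_deriv ?_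
  rw [show -(1:ℝ)/2 = -(1/2) by ring, Real.rpow_neg hpos.le, ← Real.sqrt_eq_rpow]
  field_simp
  ring

section ExtendByZero

variable {E : Type*} [NormedAddCommGroup E] {f : ℝ → E} {a b c : ℝ}

lemma IntervalIntegrable.trans_of_eqOn_zero (hf : IntervalIntegrable f volume a b)
    (hbc : b ≤ c) (h0 : EqOn f 0 (Icc b c)) : IntervalIntegrable f volume a c :=
  hf.trans <| (intervalIntegrable_const (c := (0 : E))).congr fun x hx =>
    (h0 (Ioc_subset_Icc_self (by rwa [uIoc_of_le hbc] at hx))).symm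

lemma integral_eq_of_eqOn_zero [NormedSpace ℝ E] (hab : a ≤ b) (hbc : b ≤ c)
    (h0 : EqOn f 0 (Icc b c)) : ∫ x in a..c, f x = ∫ x in a..b, f x := by
  by_cases hf : IntervalIntegrable f volume a b
  · have hzero : ∫ x in b..c, f x = 0 := by
      rw [integral_congr (g := fun _ => (0 : E)) (by rwa [uIcc_of_le hbc])]
      exact integral_zero
    rw [← integral_add_adjacent_intervals hf
      (((hf.trans_of_eqOn_zero hbc h0).symm.trans hf).symm), hzero, add_zero]
  · rw [integral_undef hf, integral_undef fun hf' => hf (hf'.mono_set ?_)]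
    rw [uIcc_of_le hab, uIcc_of_le (hab.trans hbc)]
    exact Icc_subset_Icc_right hbc

end ExtendByZero

lemma integral_mul_rpow_sq_sub_sq {a c d : ℝ} (hc : 0 ≤ c) (hca : c ≤ a) (hcd : c ≤ d) :
    IntervalIntegrable (fun s => s * (a ^ 2 - s ^ 2) ^ (-(1:ℝ)/2)) volume c d ∧
      ∫ s in c..d, s * (a ^ 2 - s ^ 2) ^ (-(1:ℝ)/2) = √(a ^ 2 - c ^ 2) - √(a ^ 2 - d ^ 2) := by
  have ftc : ∀ b, c ≤ b → b ≤ a →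
      IntervalIntegrable (fun s => s * (a ^ 2 - s ^ 2) ^ (-(1:ℝ)/2)) volume c b ∧
      ∫ s in c..b, s * (a ^ 2 - s ^ 2) ^ (-(1:ℝ)/2) = √(a ^ 2 - c ^ 2) - √(a ^ 2 - b ^ 2) := by
    intro b hcb hba
    have hcont : ContinuousOn (fun s => -√(a ^ 2 - s ^ 2)) (Icc c b) := by fun_prop
    have hderiv : ∀ s ∈ Ioo c b, HasDerivAt (fun s => -√(a ^ 2 - s ^ 2))
        (s * (a ^ 2 - s ^ 2) ^ (-(1:ℝ)/2)) s := fun s hs =>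
      hasDerivAt_neg_sqrt_sq_sub_sq (by nlinarith [hs.1, hs.2])
    have hint := intervalIntegrable_deriv_of_nonneg (by rwa [uIcc_of_le hcb])
      (by simpa [hcb] using hderiv)
      (by simpa [hcb] using fun s hs _ => mul_nonneg (hc.trans hs.le) (rpow_neg_half_nonneg _))
    exact ⟨hint, by rw [integral_eq_sub_of_hasDerivAt_of_le hcb hcont hderiv hint]; ring⟩
  rcases le_total d a with hda | had
  · exact ftc d hcd hda
  · have h0 : EqOn (fun s => s * (a ^ 2 - s ^ 2) ^ (-(1:ℝ)/2)) 0 (Icc a d) := fun s hs => by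
      simp [rpow_neg_half_eq_zero_of_nonpos (by nlinarith [hs.1] : a ^ 2 - s ^ 2 ≤ 0)]
    obtain ⟨hint, hval⟩ := ftc a hca le_rfl
    refine ⟨hint.trans_of_eqOn_zero had h0, ?_⟩
    rw [integral_eq_of_eqOn_zero hca had h0, hval, sub_self (a ^ 2), Real.sqrt_zero,
      Real.sqrt_eq_zero'.2 (show a ^ 2 - d ^ 2 ≤ 0 by nlinarith)]

lemma integrable_prod_of_nonneg {α β : Type*} [MeasurableSpace α] [MeasurableSpace β]
    {μ : Measure α} {ν : Measure β} [SFinite ν] {f : α × β → ℝ}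
    (hf : AEStronglyMeasurable f (μ.prod ν)) (hnn : ∀ x, 0 ≤ᵐ[ν] fun y => f (x, y))
    (hsec : ∀ᵐ x ∂μ, Integrable (fun y => f (x, y)) ν)
    (hint : Integrable (fun x => ∫ y, f (x, y) ∂ν) μ) : Integrable f (μ.prod ν) :=
  (integrable_prod_iff hf).2 ⟨hsec, hint.congr <| .of_forall fun x =>
    integral_congr_ae <| (hnn x).mono fun _ hy => (Real.norm_of_nonneg hy).symm⟩

namespace GaussianWKB

noncomputable def gap (s x : ℝ) : ℝ := Real.exp (-2 * x ^ 2) - s ^ 2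

noncomputable def turningPoint (s : ℝ) : ℝ := √(-Real.log s)

noncomputable def kernelIntegral (s : ℝ) : ℝ :=
  ∫ x in (0 : ℝ)..turningPoint s, gap s x ^ (-(1:ℝ)/2)

variable {s x : ℝ}

lemma turningPoint_nonneg (s : ℝ) : 0 ≤ turningPoint s := Real.sqrt_nonneg _

lemma turningPoint_sq (hs0 : 0 < s) (hs1 : s ≤ 1) : turningPoint s ^ 2 = -Real.log s :=
  Real.sq_sqrt (neg_nonneg.2 (Real.log_nonpos hs0.le hs1))

lemma turningPoint_pos (hs0 : 0 < s) (hs1 : s < 1) : 0 < turningPoint s :=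
  Real.sqrt_pos.2 (neg_pos.2 (Real.log_neg hs0 hs1))

lemma turningPoint_le_turningPoint {r : ℝ} (hs : 0 < s) (hsr : s ≤ r) :
    turningPoint r ≤ turningPoint s :=
  Real.sqrt_le_sqrt (neg_le_neg (Real.log_le_log hs hsr))

lemma continuousAt_turningPoint (hs : s ≠ 0) : ContinuousAt turningPoint s :=
  (Real.continuousAt_log hs).neg.sqrt

lemma gap_eq (hs0 : 0 < s) (hs1 : s ≤ 1) (x : ℝ) :
    gap s x = s ^ 2 * (Real.exp (2 * (turningPoint s ^ 2 - x ^ 2)) - 1) := by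
  rw [turningPoint_sq hs0 hs1, mul_sub, mul_one, gap]
  congr 1
  nth_rw 1 [← Real.exp_log hs0]
  rw [← Real.exp_nat_mul, ← Real.exp_add]
  ring_nf

lemma gap_nonpos (hs0 : 0 < s) (hs1 : s ≤ 1) (hx : turningPoint s ≤ x) : gap s x ≤ 0 := by
  have hsq : turningPoint s ^ 2 ≤ x ^ 2 := pow_le_pow_left₀ (turningPoint_nonneg s) hx 2
  rw [gap_eq hs0 hs1]
  exact mul_nonpos_of_nonneg_of_nonpos (sq_nonneg s)
    (sub_nonpos.2 (Real.exp_le_one_iff.2 (by linarith)))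

lemma le_gap (hs0 : 0 < s) (hs1 : s ≤ 1) (x : ℝ) :
    2 * s ^ 2 * (turningPoint s ^ 2 - x ^ 2) ≤ gap s x := by
  have hexp := Real.add_one_le_exp (2 * (turningPoint s ^ 2 - x ^ 2))
  rw [gap_eq hs0 hs1]
  nlinarith [mul_le_mul_of_nonneg_left hexp (sq_nonneg s)]

lemma le_exp_neg_sq (hs0 : 0 < s) (hs1 : s ≤ 1) (hx0 : 0 ≤ x) (hx : x ≤ turningPoint s) :
    s ≤ Real.exp (-x ^ 2) := by
  have hsq : x ^ 2 ≤ -Real.log s :=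
    turningPoint_sq hs0 hs1 ▸ pow_le_pow_left₀ hx0 hx 2
  calc s = Real.exp (Real.log s) := (Real.exp_log hs0).symm
    _ ≤ Real.exp (-x ^ 2) := Real.exp_le_exp.2 (by linarith)

lemma rpow_gap_turningPoint_mul_le (hs0 : 0 < s) (hs1 : s < 1) {u : ℝ} (hu0 : 0 ≤ u)
    (hu1 : u ≤ 1) :
    gap s (turningPoint s * u) ^ (-(1:ℝ)/2) ≤
      (2 * s ^ 2 * turningPoint s ^ 2) ^ (-(1:ℝ)/2) * (1 - u) ^ (-(1:ℝ)/2) := by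
  rcases hu1.lt_or_eq with hu1 | rfl
  · have htp := turningPoint_pos hs0 hs1
    have hlow : 2 * s ^ 2 * turningPoint s ^ 2 * (1 - u) ≤ gap s (turningPoint s * u) := by
      refine le_trans ?_ (le_gap hs0 hs1.le _)
      have : u ^ 2 ≤ u := by nlinarith
      have : 0 ≤ 2 * s ^ 2 * turningPoint s ^ 2 := by positivity
      nlinarith
    calc gap s (turningPoint s * u) ^ (-(1:ℝ)/2)
        ≤ (2 * s ^ 2 * turningPoint s ^ 2 * (1 - u)) ^ (-(1:ℝ)/2) :=
          Real.rpow_le_rpow_of_nonpos (mul_pos (by positivity) (sub_pos.2 hu1)) hlow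
            (by norm_num)
      _ = _ := Real.mul_rpow (by positivity) (by linarith)
  · rw [mul_one, rpow_neg_half_eq_zero_of_nonpos (gap_nonpos hs0 hs1.le le_rfl), sub_self,
      Real.zero_rpow (by norm_num), mul_zero]

lemma measurable_rpow_gap_turningPoint_mul (s : ℝ) :
    Measurable fun u => gap s (turningPoint s * u) ^ (-(1:ℝ)/2) := by
  unfold gap; fun_prop

lemma intervalIntegrable_rpow_gap_turningPoint_mul (hs0 : 0 < s) (hs1 : s < 1) :
    IntervalIntegrable (fun u => gap s (turningPoint s * u) ^ (-(1:ℝ)/2)) volume 0 1 :=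
  intervalIntegrable_of_norm_le_const_mul_rpow_sub (by norm_num : (-1 : ℝ) < -1 / 2)
    (measurable_rpow_gap_turningPoint_mul s).aestronglyMeasurable fun u hu => by
      rw [uIoc_of_le zero_le_one] at hu
      rw [Real.norm_of_nonneg (rpow_neg_half_nonneg _)]
      exact rpow_gap_turningPoint_mul_le hs0 hs1 hu.1.le hu.2

lemma intervalIntegrable_rpow_gap (hs0 : 0 < s) (hs1 : s < 1) :
    IntervalIntegrable (fun x => gap s x ^ (-(1:ℝ)/2)) volume 0 (turningPoint s) := by
  have hne := (turningPoint_pos hs0 hs1).ne'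
  have := (IntervalIntegrable.comp_mul_left_iff (f := fun x => gap s x ^ (-(1:ℝ)/2))
    (a := 0) (b := turningPoint s) hne).1
  rw [zero_div, div_self hne] at this
  exact this (intervalIntegrable_rpow_gap_turningPoint_mul hs0 hs1)

lemma kernelIntegral_eq_mul (hs0 : 0 < s) (hs1 : s < 1) :
    kernelIntegral s =
      turningPoint s * ∫ u in (0 : ℝ)..1, gap s (turningPoint s * u) ^ (-(1:ℝ)/2) := by
  have hne := (turningPoint_pos hs0 hs1).ne'
  rw [integral_comp_mul_left (fun x => gap s x ^ (-(1:ℝ)/2)) hne, smul_eq_mul, mul_zero,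
    mul_one, mul_inv_cancel_left₀ hne, kernelIntegral]

lemma continuousAt_integral_rpow_gap_turningPoint_mul {t : ℝ} (ht : t ∈ Ioo 0 1) :
    ContinuousAt (fun s => ∫ u in (0 : ℝ)..1, gap s (turningPoint s * u) ^ (-(1:ℝ)/2)) t := by
  have htp := continuousAt_turningPoint ht.1.ne'
  set C : ℝ → ℝ := fun s => (2 * s ^ 2 * turningPoint s ^ 2) ^ (-(1:ℝ)/2)
  have hC : ContinuousAt C t :=
    (by fun_prop : ContinuousAt (fun s => 2 * s ^ 2 * turningPoint s ^ 2) t).rpow_const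
      (.inl (by have := ht.1; have := turningPoint_pos ht.1 ht.2; positivity))
  refine continuousAt_of_dominated_interval (bound := fun u => (C t + 1) * (1 - u) ^ (-(1:ℝ)/2))
    (.of_forall fun s => (measurable_rpow_gap_turningPoint_mul s).aestronglyMeasurable) ?_
    (intervalIntegrable_const_mul_rpow_sub (by norm_num)) ?_
  · filter_upwards [Ioo_mem_nhds ht.1 ht.2, hC.eventually_lt continuousAt_const (lt_add_one _)]
      with s hs hCs
    refine .of_forall fun u hu => ?_
    rw [uIoc_of_le zero_le_one] at hu
    rw [Real.norm_of_nonneg (rpow_neg_half_nonneg _)]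
    refine (rpow_gap_turningPoint_mul_le hs.1 hs.2 hu.1.le hu.2).trans ?_
    gcongr
    exact Real.rpow_nonneg (sub_nonneg.2 hu.2) _
  · filter_upwards [Measure.ae_ne volume 1] with u hu1 hu
    rw [uIoc_of_le zero_le_one] at hu
    have hpos : 0 < gap t (turningPoint t * u) := by
      refine lt_of_lt_of_le ?_ (le_gap ht.1 ht.2.le _)
      have := turningPoint_pos ht.1 ht.2
      have : u ^ 2 < 1 := by nlinarith [lt_of_le_of_ne hu.2 hu1, hu.1]
      have : 0 < turningPoint t ^ 2 * (1 - u ^ 2) := by positivity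
      nlinarith [sq_pos_of_pos ht.1]
    have hgap : ContinuousAt (fun s => gap s (turningPoint s * u)) t := by unfold gap; fun_prop
    exact hgap.rpow_const (.inl hpos.ne')

lemma continuousOn_kernelIntegral : ContinuousOn kernelIntegral (Ioo 0 1) := by
  intro t ht
  refine ContinuousAt.continuousWithinAt (((continuousAt_turningPoint ht.1.ne').mul
    (continuousAt_integral_rpow_gap_turningPoint_mul ht)).congr ?_)
  filter_upwards [Ioo_mem_nhds ht.1 ht.2] with s hs
  exact (kernelIntegral_eq_mul hs.1 hs.2).symm

lemma integral_mul_rpow_gap {t₁ t₂ : ℝ} (ht₁ : 0 < t₁) (ht₁₂ : t₁ ≤ t₂) (ht₂ : t₂ ≤ 1)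
    (hx0 : 0 ≤ x) (hx : x ≤ turningPoint t₁) :
    IntervalIntegrable (fun s => s * gap s x ^ (-(1:ℝ)/2)) volume t₁ t₂ ∧
      ∫ s in t₁..t₂, s * gap s x ^ (-(1:ℝ)/2) = √(gap t₁ x) - √(gap t₂ x) := by
  have hsq : Real.exp (-x ^ 2) ^ 2 = Real.exp (-2 * x ^ 2) := by
    rw [← Real.exp_nat_mul]; ring_nf
  simpa only [gap, hsq] using integral_mul_rpow_sq_sub_sq ht₁.le
    (le_exp_neg_sq ht₁ (ht₁₂.trans ht₂) hx0 hx) ht₁₂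

lemma F_sub_F_eq_integral {t₁ t₂ : ℝ} (ht₁ : 0 < t₁) (ht₁₂ : t₁ ≤ t₂) (ht₂ : t₂ ≤ 1) :
    F t₁ - F t₂ = ∫ s in t₁..t₂, s * kernelIntegral s := by
  set B := turningPoint t₁
  set k : ℝ → ℝ → ℝ := fun x s => s * gap s x ^ (-(1:ℝ)/2)
  have hB : 0 ≤ B := turningPoint_nonneg t₁
  have hF₂ : F t₂ = ∫ x in (0 : ℝ)..B, √(gap t₂ x) :=
    (integral_eq_of_eqOn_zero (turningPoint_nonneg t₂) (turningPoint_le_turningPoint ht₁ ht₁₂)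
      fun x hx => Real.sqrt_eq_zero'.2 (gap_nonpos (ht₁.trans_le ht₁₂) ht₂ hx.1)).symm
  have hcont : ∀ t, Continuous fun x => √(gap t x) := fun t => by unfold gap; fun_prop
  have hint : Integrable (Function.uncurry k)
      ((volume.restrict (Ioc 0 B)).prod (volume.restrict (Ioc t₁ t₂))) := by
    refine integrable_prod_of_nonneg ?_ (fun x => ?_) ?_ ?_
    · exact Measurable.aestronglyMeasurable (by simp only [k, gap, Function.uncurry_def]; fun_prop)
    · filter_upwards [ae_restrict_mem measurableSet_Ioc] with s hs
      exact mul_nonneg (ht₁.trans hs.1).le (rpow_neg_half_nonneg _)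
    · filter_upwards [ae_restrict_mem measurableSet_Ioc] with x hx
      exact (intervalIntegrable_iff_integrableOn_Ioc_of_le ht₁₂).1
        (integral_mul_rpow_gap ht₁ ht₁₂ ht₂ hx.1.le hx.2).1
    · refine ((hcont t₁).sub (hcont t₂)).integrableOn_Ioc.congr ?_
      filter_upwards [ae_restrict_mem measurableSet_Ioc] with x hx
      exact (integral_mul_rpow_gap ht₁ ht₁₂ ht₂ hx.1.le hx.2).2.symm.trans
        (integral_of_le ht₁₂)
  calc F t₁ - F t₂ = ∫ x in (0 : ℝ)..B, (√(gap t₁ x) - √(gap t₂ x)) := by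
        rw [hF₂, integral_sub ((hcont t₁).intervalIntegrable _ _)
          ((hcont t₂).intervalIntegrable _ _)]
        rfl
    _ = ∫ x in (0 : ℝ)..B, ∫ s in t₁..t₂, k x s := integral_congr fun x hx => by
        rw [uIcc_of_le hB] at hx
        exact (integral_mul_rpow_gap ht₁ ht₁₂ ht₂ hx.1 hx.2).2.symm
    _ = ∫ s in t₁..t₂, ∫ x in (0 : ℝ)..B, k x s := by
        simp only [integral_of_le ht₁₂, integral_of_le hB]
        exact integral_integral_swap hint
    _ = ∫ s in t₁..t₂, s * kernelIntegral s := integral_congr fun s hs => by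
        rw [uIcc_of_le ht₁₂] at hs
        have hs0 : 0 < s := ht₁.trans_le hs.1
        show ∫ x in (0 : ℝ)..B, s * gap s x ^ (-(1:ℝ)/2) = _
        rw [intervalIntegral.integral_const_mul, kernelIntegral,
          integral_eq_of_eqOn_zero (turningPoint_nonneg s) (turningPoint_le_turningPoint ht₁ hs.1)
            fun x hx => rpow_neg_half_eq_zero_of_nonpos (gap_nonpos hs0 (hs.2.trans ht₂) hx.1)]

lemma F_eq_sub_integral {t u : ℝ} (ht : t ∈ Ioo 0 1) (hu : u ∈ Ioo 0 1) :
    F u = F t - ∫ s in t..u, s * kernelIntegral s := by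
  rcases le_total t u with htu | hut
  · linarith [F_sub_F_eq_integral ht.1 htu hu.2.le]
  · rw [integral_symm]
    linarith [F_sub_F_eq_integral hu.1 hut ht.2.le]

end GaussianWKB

open GaussianWKB

/-- `F` is differentiable on `(0,1)` with
`F′(t) = −t ∫_0^{√(−ln t)} (e^{−2x²} − t²)^{−1/2} dx`, and the latter improper
integral converges. -/
theorem F_hasDerivAt (t : ℝ) (ht : t ∈ Set.Ioo (0 : ℝ) 1) :
    IntervalIntegrable (fun x : ℝ => (Real.exp (-2 * x ^ 2) - t ^ 2) ^ (-(1 : ℝ) / 2))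
      volume 0 (Real.sqrt (-Real.log t)) ∧
    HasDerivAt F
      (-t * ∫ x in (0 : ℝ)..(Real.sqrt (-Real.log t)),
        (Real.exp (-2 * x ^ 2) - t ^ 2) ^ (-(1 : ℝ) / 2)) t := by
  refine ⟨intervalIntegrable_rpow_gap ht.1 ht.2, ?_⟩
  have hcont : ContinuousOn (fun s => s * kernelIntegral s) (Ioo 0 1) :=
    continuousOn_id.mul continuousOn_kernelIntegral
  have hprim : HasDerivAt (fun u => ∫ s in t..u, s * kernelIntegral s) (t * kernelIntegral t) t :=
    integral_hasDerivAt_right .refl (hcont.stronglyMeasurableAtFilter isOpen_Ioo t ht)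
      (hcont.continuousAt (Ioo_mem_nhds ht.1 ht.2))
  have hF : (fun u => F t - ∫ s in t..u, s * kernelIntegral s) =ᶠ[𝓝 t] F := by
    filter_upwards [Ioo_mem_nhds ht.1 ht.2] with u hu
    exact (F_eq_sub_integral ht hu).symm
  rw [neg_mul]
  exact (hprim.const_sub (F t)).congr_of_eventuallyEq hF.symm
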